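/- arXiv:1603.04650 — 2 statements merged into one kernel-verified Lean document; each statement's English description precedes it below -/
import Mathlib

section
/- If α is a normalized 3-cocycle of a finite group G with coefficients in k*, and we define α(f,g|h) = α(f,g,h)^{-1} α(f, ghg^{-1}, g) α(fg h (fg)^{-1}, f, g)^{-1}, then for all f,g,h,u in G: α(f,gh|u)·α(g,h|u) = α(fg,h|u)·α(f,g|huh^{-1}). -/
/-!
`α(f,g|h)` is the transgression of `α`, and the identity is its twisted 2-cocycle condition.
Writing `v = ʰu`, `w = ᵍv` and `x = ᶠw`, so that `vh = hu`, `wg = gv` and `xf = fw`, it is the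
quotient of the cocycle identities at `(f,g,v,h)` and `(x,f,g,h)` by those at `(f,g,h,u)` and
`(f,w,g,h)`: every term of these four identities not in the claim occurs once on each side.
-/

/-- The 2-cochain `α(f,g|h) = α(f,g,h)⁻¹ · α(f, ghg⁻¹, g) · α((fg)h(fg)⁻¹, f, g)⁻¹`
derived from a 3-cocycle `α`. -/
def aux2 {G : Type*} [Group G] {k : Type*} [Field k]
    (α : G → G → G → kˣ) (f g h : G) : kˣ :=
  (α f g h)⁻¹ * α f (g * h * g⁻¹) g * (α ((f * g) * h * (f * g)⁻¹) f g)⁻¹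

section

variable {G M : Type*} [Group G] [CommGroup M]

def IsThreeCocycle (α : G → G → G → M) : Prop :=
  ∀ f g h l : G, α g h l * α f (g * h) l * α f g h = α (f * g) h l * α f g (h * l)

def transgression (α : G → G → G → M) (f g h : G) : M :=
  (α f g h)⁻¹ * α f (g * h * g⁻¹) g * (α (f * g * h * (f * g)⁻¹) f g)⁻¹

namespace IsThreeCocycle

variable {α : G → G → G → M}

theorem transgression_mul_of_semiconjBy (hα : IsThreeCocycle α) {f g h u v w x : G}
    (hv : SemiconjBy h u v) (hw : SemiconjBy g v w) (hx : SemiconjBy f w x) :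
    (α f (g * h) u)⁻¹ * α f w (g * h) * (α x f (g * h))⁻¹ *
        ((α g h u)⁻¹ * α g v h * (α w g h)⁻¹)
      = (α (f * g) h u)⁻¹ * α (f * g) v h * (α x (f * g) h)⁻¹ *
        ((α f g v)⁻¹ * α f w g * (α x f g)⁻¹) := by
  have e₁ := hα f g h u
  have e₂ := hα f g v h
  have e₃ := hα x f g h
  have e₄ := hα f w g h
  rw [← hv.eq] at e₂
  rw [← hx.eq] at e₃
  rw [← hw.eq] at e₄
  apply Additive.ofMul.injective
  apply_fun Additive.ofMul at e₁ e₂ e₃ e₄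
  simp only [ofMul_mul, ofMul_inv] at *
  linear_combination (norm := abel) e₂ - e₁ + e₃ - e₄

theorem transgression_mul (hα : IsThreeCocycle α) (f g h u : G) :
    transgression α f (g * h) u * transgression α g h u
      = transgression α (f * g) h u * transgression α f g (h * u * h⁻¹) := by
  have key := hα.transgression_mul_of_semiconjBy (.conj_mk h u) (.conj_mk g _) (.conj_mk f _)
  unfold transgression
  convert key using 5 <;> group

end IsThreeCocycle

end

theorem stmt0_general {G : Type*} [Group G] {k : Type*} [Field k] (α : G → G → G → kˣ)
    (hcoc : ∀ f g h l : G,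
      α g h l * α f (g * h) l * α f g h = α (f * g) h l * α f g (h * l))
    (f g h u : G) :
    aux2 α f (g * h) u * aux2 α g h u
      = aux2 α (f * g) h u * aux2 α f g (h * u * h⁻¹) :=
  IsThreeCocycle.transgression_mul hcoc f g h u

/-- for a normalized 3-cocycle `α` on a group `G` with values in `k*`,
the identity `α(f,gh|u)·α(g,h|u) = α(fg,h|u)·α(f,g|huh⁻¹)` holds. -/
theorem stmt0 {G : Type*} [Group G] {k : Type*} [Field k] (α : G → G → G → kˣ)
    (hcoc : ∀ f g h l : G,
      α g h l * α f (g * h) l * α f g h = α (f * g) h l * α f g (h * l))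
    (hnorm : ∀ f g h : G, f = 1 ∨ g = 1 ∨ h = 1 → α f g h = 1)
    (f g h u : G) :
    aux2 α f (g * h) u * aux2 α g h u
      = aux2 α (f * g) h u * aux2 α f g (h * u * h⁻¹) :=
  stmt0_general α hcoc f g h u
end

section
/- If α is a normalized 3-cocycle of a group G valued in k*, with α(f|g,h) = α(f,g,h)·α(^f g, f, h)^{-1}·α(^f g, ^f h, f) and α(f,g|h) defined as α(f,g,h)^{-1}α(f,^g h,g)α(^{fg} h,f,g)^{-1}, then α(fg|u,v)·α(f,g|u)·α(f,g|v) = α(f,g|uv)·α(g|u,v)·α(f|gug^{-1}, gvg^{-1}) for all f,g,u,v ∈ G. -/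
/-- `α(f|g,h) = α(f,g,h) · α(fgf⁻¹, f, h)⁻¹ · α(fgf⁻¹, fhf⁻¹, f)`. -/
def aux1 {G : Type*} [Group G] {k : Type*} [Field k]
    (α : G → G → G → kˣ) (f g h : G) : kˣ :=
  α f g h * (α (f * g * f⁻¹) f h)⁻¹ * α (f * g * f⁻¹) (f * h * f⁻¹) f

/-!
For an arbitrary `α`, the quotient of the left side by the right side is
`dα(f,u',g,v) · dα(x,f,v',g)` divided by `dα(x,f,g,v) · dα(f,u',v',g) · dα(f,g,u,v) · dα(x,y,f,g)`,
where `x = ^{fg}u`, `y = ^{fg}v`, `u' = ^g u`, `v' = ^g v` and `dα` is the coboundary.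
For a cocycle every factor is `1`.
-/

section Coboundary

variable {G M : Type*} [Group G] [CommGroup M]

def coboundary (α : G → G → G → M) (f g h l : G) : M :=
  α g h l * α f (g * h) l * α f g h / (α (f * g) h l * α f g (h * l))

theorem coboundary_eq_one {α : G → G → G → M}
    (hcoc : ∀ f g h l : G,
      α g h l * α f (g * h) l * α f g h = α (f * g) h l * α f g (h * l))
    (f g h l : G) : coboundary α f g h l = 1 :=
  div_eq_one.mpr (hcoc f g h l)

end Coboundary

theorem aux1_mul_aux2_mul_aux2_mul_coboundary {G : Type*} [Group G] {k : Type*} [Field k]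
    (α : G → G → G → kˣ) (f g u v : G) :
    aux1 α (f * g) u v * aux2 α f g u * aux2 α f g v
        * (coboundary α (f * g * u * (f * g)⁻¹) f g v
          * coboundary α f (g * u * g⁻¹) (g * v * g⁻¹) g
          * coboundary α f g u v
          * coboundary α (f * g * u * (f * g)⁻¹) (f * g * v * (f * g)⁻¹) f g)
      = aux2 α f g (u * v) * aux1 α g u v * aux1 α f (g * u * g⁻¹) (g * v * g⁻¹)
        * (coboundary α f (g * u * g⁻¹) g v
          * coboundary α (f * g * u * (f * g)⁻¹) f (g * v * g⁻¹) g) := by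
  simp only [aux1, aux2, coboundary, mul_assoc, mul_inv_rev, mul_one,
    inv_mul_cancel_left, inv_mul_cancel]
  rw [Units.ext_iff]
  push_cast
  field_simp

theorem stmt1_general {G : Type*} [Group G] {k : Type*} [Field k] (α : G → G → G → kˣ)
    (hcoc : ∀ f g h l : G,
      α g h l * α f (g * h) l * α f g h = α (f * g) h l * α f g (h * l))
    (f g u v : G) :
    aux1 α (f * g) u v * aux2 α f g u * aux2 α f g v
      = aux2 α f g (u * v) * aux1 α g u v * aux1 α f (g * u * g⁻¹) (g * v * g⁻¹) := by
  simpa only [coboundary_eq_one hcoc, mul_one] using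
    aux1_mul_aux2_mul_aux2_mul_coboundary α f g u v

/-- for a normalized 3-cocycle `α` on `G` valued in `k*`,
`α(fg|u,v)·α(f,g|u)·α(f,g|v) = α(f,g|uv)·α(g|u,v)·α(f|gug⁻¹, gvg⁻¹)`. -/
theorem stmt1 {G : Type*} [Group G] {k : Type*} [Field k] (α : G → G → G → kˣ)
    (hcoc : ∀ f g h l : G,
      α g h l * α f (g * h) l * α f g h = α (f * g) h l * α f g (h * l))
    (hnorm : ∀ f g h : G, f = 1 ∨ g = 1 ∨ h = 1 → α f g h = 1)
    (f g u v : G) :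
    aux1 α (f * g) u v * aux2 α f g u * aux2 α f g v
      = aux2 α f g (u * v) * aux1 α g u v * aux1 α f (g * u * g⁻¹) (g * v * g⁻¹) :=
  stmt1_general α hcoc f g u v
end
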